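/- arXiv:2309.04020 — 4 statements merged into one kernel-verified Lean document; each statement's English description precedes it below -/
import Mathlib

section
/- Fix a constraint C. A feasible mechanism f : 𝒫 → C is a group strategy-proof local priority mechanism if and only if it satisfies Unanimity, the Fixed compromiser condition, and Maskin monotonicity. -/
/- Common framework: constrained allocation, local priority mechanisms
   (Root & Ahn, "Local Priority Mechanisms"). Agents `N`, objects `O`.
   A strict preference is encoded as a `LinearOrder` on `O`, where
   `pi.lt b a` means `a` is strictly preferred to `b`. -/

open Classical

noncomputable section

variable {N O : Type}

/-- `a` is strictly preferred to `b` under `pi`. -/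
def sPref (pi : LinearOrder O) (a b : O) : Prop := pi.lt b a

/-- `a` is weakly preferred to `b` under `pi`. -/
def wPref (pi : LinearOrder O) (a b : O) : Prop := a = b ∨ pi.lt b a

/-- The favourite (top-ranked) object under `pi`. -/
def topObj [Fintype O] [Nonempty O] (pi : LinearOrder O) : O :=
  @Finset.max' O pi Finset.univ Finset.univ_nonempty

/-- `tau1 p` is the allocation assigning each agent her favourite object. -/
def tau1 [Fintype O] [Nonempty O] (p : N → LinearOrder O) : N → O :=
  fun i => topObj (p i)

/-- The strict lower contour set of `a` under `pi`, as a finset. -/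
def LCfin [Fintype O] (pi : LinearOrder O) (a : O) : Finset O :=
  Finset.univ.filter fun b => pi.lt b a

/-- The best element of the strict lower contour set of `a` (junk value `a` if empty). -/
def bestLC [Fintype O] (pi : LinearOrder O) (a : O) : O :=
  if h : (LCfin pi a).Nonempty then @Finset.max' O pi _ h else a

/-- At `x`, no local compromiser has an empty strict lower contour set. -/
def lpNoFail [Fintype O] (α : (N → O) → Set N) (p : N → LinearOrder O) (x : N → O) : Prop :=
  ∀ i ∈ α x, (LCfin (p i) (x i)).Nonempty

/-- One step of the local priority algorithm: all local compromisers move to their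
next-favourite object, everyone else stays put. -/
def lpStep [Fintype O] (α : (N → O) → Set N) (p : N → LinearOrder O) (x : N → O) : N → O :=
  fun k => if k ∈ α x then bestLC (p k) (x k) else x k

/-- The local priority algorithm for `α` at profile `p` terminates (without failure)
returning the feasible allocation `y`. -/
def lpRunsTo [Fintype O] [Nonempty O] (C : Set (N → O)) (α : (N → O) → Set N)
    (p : N → LinearOrder O) (y : N → O) : Prop :=
  ∃ (m : ℕ) (x : ℕ → N → O),
    x 0 = tau1 p ∧
    (∀ t < m, x t ∉ C ∧ lpNoFail α p (x t) ∧ x (t + 1) = lpStep α p (x t)) ∧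
    x m = y ∧ y ∈ C

/-- `α` is a local compromiser assignment for the constraint `C`. -/
def IsLCA (C : Set (N → O)) (α : (N → O) → Set N) : Prop :=
  ∀ x, (x ∉ C → (α x).Nonempty) ∧ (x ∈ C → α x = ∅)

/-- `α` is implementable: the local priority algorithm returns a feasible
allocation (never the failure symbol) on every profile. -/
def lpImplementable [Fintype O] [Nonempty O] (C : Set (N → O)) (α : (N → O) → Set N) : Prop :=
  ∀ p : N → LinearOrder O, ∃ y, lpRunsTo C α p y

/-- `α` is an implementable local compromiser assignment for `C` inducing the mechanism `f`,
i.e. `f = LP_α`. -/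
def lpInduces [Fintype O] [Nonempty O] (C : Set (N → O)) (α : (N → O) → Set N)
    (f : (N → LinearOrder O) → N → O) : Prop :=
  IsLCA C α ∧ ∀ p, lpRunsTo C α p (f p)

/-- The local priority mechanism `LP_α` (well defined whenever `α` is implementable,
since the algorithm is deterministic). -/
def LPmech [Fintype O] [Nonempty O] (C : Set (N → O)) (α : (N → O) → Set N)
    (p : N → LinearOrder O) : N → O :=
  if h : ∃ y, lpRunsTo C α p y then h.choose else fun _ => Classical.arbitrary O

/-- Group strategy-proofness. -/
def GSP (f : (N → LinearOrder O) → N → O) : Prop :=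
  ∀ (p p' : N → LinearOrder O) (M : Set N), M.Nonempty → (∀ j ∉ M, p' j = p j) →
    ¬ ((∀ j ∈ M, wPref (p j) (f p' j) (f p j)) ∧ ∃ k ∈ M, sPref (p k) (f p' k) (f p k))

/-- (Individual) strategy-proofness. -/
def StratProof (f : (N → LinearOrder O) → N → O) : Prop :=
  ∀ (p p' : N → LinearOrder O) (i : N), (∀ j, j ≠ i → p' j = p j) →
    ¬ sPref (p i) (f p' i) (f p i)

/-- Nonbossiness. -/
def Nonbossy (f : (N → LinearOrder O) → N → O) : Prop :=
  ∀ (p p' : N → LinearOrder O) (i : N), (∀ j, j ≠ i → p' j = p j) →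
    f p' i = f p i → f p' = f p

/-- Maskin monotonicity. -/
def MaskinMono (f : (N → LinearOrder O) → N → O) : Prop :=
  ∀ p p' : N → LinearOrder O,
    (∀ (i : N) (b : O), (p i).lt b (f p i) → (p' i).lt b (f p i)) → f p' = f p

/-- Unanimity. -/
def Unanimity [Fintype O] [Nonempty O] (C : Set (N → O))
    (f : (N → LinearOrder O) → N → O) : Prop :=
  ∀ p, tau1 p ∈ C → f p = tau1 p

/-- The Fixed compromiser condition. -/
def FixedComp [Fintype O] [Nonempty O] (C : Set (N → O))
    (f : (N → LinearOrder O) → N → O) : Prop :=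
  ∀ μ, μ ∉ C → ∃ i : N, ∀ p, tau1 p = μ → f p i ≠ μ i

/-- `pi'` is obtained from `pi` by moving `c` to the bottom of the ranking. -/
def MoveBottom (pi pi' : LinearOrder O) (c : O) : Prop :=
  (∀ b, b ≠ c → pi'.lt c b) ∧ (∀ a b, a ≠ c → b ≠ c → (pi'.lt a b ↔ pi.lt a b))

/-- Compromiser invariance. -/
def CompInv [Fintype O] [Nonempty O] (C : Set (N → O))
    (f : (N → LinearOrder O) → N → O) : Prop :=
  ∀ μ, μ ∉ C → ∀ p p' : N → LinearOrder O, tau1 p = μ →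
    (∀ i, (∀ q, tau1 q = μ → f q i ≠ μ i) → MoveBottom (p i) (p' i) (μ i)) →
    (∀ i, ¬ (∀ q, tau1 q = μ → f q i ≠ μ i) → p' i = p i) →
    f p' = f p

/-- Pareto efficiency relative to the constraint `C`. -/
def ParetoEff (C : Set (N → O)) (f : (N → LinearOrder O) → N → O) : Prop :=
  ∀ p, ¬ ∃ ν ∈ C, (∀ i, wPref (p i) (ν i) (f p i)) ∧ ∃ k, sPref (p k) (ν k) (f p k)

/-- `diffSet x y = d(x,y)`, the set of agents on which `x` and `y` differ. -/
def diffSet (x y : N → O) : Set N := {i | x i ≠ y i}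

/-- Forward consistency. -/
def ForwardCons (α : (N → O) → Set N) : Prop :=
  ∀ x y : N → O, diffSet x y ⊆ α x → α x \ diffSet x y ⊆ α y

/-- The sequence of allocations `z 0, …, z m` is acyclic. -/
def AcyclicSeq (z : ℕ → N → O) (m : ℕ) : Prop :=
  ∀ (i : N) (r s t : ℕ), r < s → s < t → t ≤ m → z r i = z t i → z s i = z r i

/-- `x` and `y` are `i`-connected under `α`. -/
def IConn (α : (N → O) → Set N) (i : N) (x y : N → O) : Prop :=
  ∃ m : ℕ, 1 ≤ m ∧ ∃ z : ℕ → N → O,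
    z 0 = x ∧ z m = y ∧ AcyclicSeq z m ∧ diffSet (z 0) (z 1) = {i} ∧
    ∀ l < m, diffSet (z l) (z (l + 1)) ⊆ α (z l)

/-- Backward consistency. -/
def BackCons (C : Set (N → O)) (α : (N → O) → Set N) : Prop :=
  ∀ (i : N) (x y : N → O), x ∉ C → y ∉ C → IConn α i x y →
    ∀ x' : N → O, diffSet x x' ⊆ α y → i ∉ diffSet x x' → i ∈ α x'

/-- The pointwise union of all implementable local compromiser assignments inducing `f`. -/
def alphaUnionAll [Fintype O] [Nonempty O] (C : Set (N → O))
    (f : (N → LinearOrder O) → N → O) : (N → O) → Set N :=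
  fun x => {i | ∃ β, lpInduces C β f ∧ i ∈ β x}

end


/-! Maskin monotonicity alone gives group strategy-proofness: if a coalition deviates from `p` to
`p'` and every member weakly gains, lift each member's object under `p'` to the top of her
`p`-ranking; by monotonicity `f` chooses both `f p` and `f p'` there, so nobody strictly gains.
Conversely, group strategy-proofness gives strategy-proofness and nonbossiness, and these
propagate Maskin monotonicity one agent at a time.

A local priority mechanism is unanimous, and a compromiser at the infeasible top allocation `μ`
ends strictly below `μ`, which is the Fixed compromiser condition. For the converse take as
compromisers at an infeasible `x` the agents to whom `f` never gives their `x`-object at profiles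
topped by `x`. By Maskin monotonicity every allocation of the run stays weakly above `f p`, and
compromisers are strictly above it, so the run never fails; each step lowers some agent's rank, so
it terminates; and by Unanimity its feasible end point is `f p`. -/

section Preferences

variable {O : Type} (pi : LinearOrder O)

theorem wPref_iff_le {a b : O} : wPref pi a b ↔ pi.le b a := by
  let := pi
  exact (eq_comm.or Iff.rfl).trans le_iff_eq_or_lt.symm

theorem le_topObj [Fintype O] [Nonempty O] (a : O) : pi.le a (topObj pi) := by
  let := pi
  exact Finset.le_max' _ a (Finset.mem_univ a)

theorem topObj_eq_of_forall_le [Fintype O] [Nonempty O] {c : O} (h : ∀ b, pi.le b c) :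
    topObj pi = c := by
  let := pi
  exact le_antisymm (h _) (le_topObj pi c)

theorem mem_LCfin [Fintype O] {a b : O} : b ∈ LCfin pi a ↔ pi.lt b a := by
  simp [LCfin]

theorem card_LCfin_le_of_le [Fintype O] {a b : O} (h : pi.le a b) :
    (LCfin pi a).card ≤ (LCfin pi b).card := by
  let := pi
  exact Finset.card_le_card fun c hc =>
    (mem_LCfin pi).2 (lt_of_lt_of_le ((mem_LCfin pi).1 hc) h)

theorem card_LCfin_lt_of_lt [Fintype O] {a b : O} (h : pi.lt a b) :
    (LCfin pi a).card < (LCfin pi b).card := by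
  let := pi
  refine Finset.card_lt_card ⟨fun c hc => (mem_LCfin pi).2 (((mem_LCfin pi).1 hc).trans h),
    fun hsub => lt_irrefl a ((mem_LCfin pi).1 (hsub ((mem_LCfin pi).2 h)))⟩

theorem bestLC_lt [Fintype O] {a : O} (h : (LCfin pi a).Nonempty) : pi.lt (bestLC pi a) a := by
  rw [bestLC, dif_pos h]
  exact (mem_LCfin pi).1 (@Finset.max'_mem O pi _ h)

theorem bestLC_le [Fintype O] (a : O) : pi.le (bestLC pi a) a := by
  let := pi
  by_cases h : (LCfin pi a).Nonempty
  · exact (bestLC_lt pi h).le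
  · rw [bestLC, dif_neg h]

theorem le_bestLC [Fintype O] {a b : O} (h : pi.lt b a) : pi.le b (bestLC pi a) := by
  have hne : (LCfin pi a).Nonempty := ⟨b, (mem_LCfin pi).2 h⟩
  rw [bestLC, dif_pos hne]
  let := pi
  exact Finset.le_max' _ b ((mem_LCfin pi).2 h)

/-- `moveTop pi c` ranks `c` first and otherwise agrees with `pi`. -/
@[reducible]
noncomputable def moveTop (c : O) : LinearOrder O :=
  letI := pi
  LinearOrder.lift' (fun a => if a = c then ⊤ else (a : WithTop O)) fun a b hab => by
    by_cases ha : a = c <;> by_cases hb : b = c <;> simp_all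

theorem moveTop_lt_self {b c : O} (hb : b ≠ c) : (moveTop pi c).lt b c := by
  let := pi
  change (if b = c then ⊤ else (b : WithTop O)) < if c = c then ⊤ else (c : WithTop O)
  simp [hb]

theorem moveTop_lt_of_lt {b c d : O} (hdc : pi.le d c) (hbd : pi.lt b d) :
    (moveTop pi c).lt b d := by
  let := pi
  have hbc : b ≠ c := (lt_of_lt_of_le hbd hdc).ne
  change (if b = c then ⊤ else (b : WithTop O)) < if d = c then ⊤ else (d : WithTop O)
  by_cases hd : d = c
  · simp [hbc, hd]
  · simpa [hbc, hd] using hbd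

theorem topObj_moveTop [Fintype O] [Nonempty O] (c : O) : topObj (moveTop pi c) = c := by
  refine topObj_eq_of_forall_le _ fun b => ?_
  let := moveTop pi c
  by_cases hb : b = c
  · exact hb.le
  · exact (moveTop_lt_self pi hb).le

end Preferences

section Incentives

variable {N O : Type} {f : (N → LinearOrder O) → N → O}

theorem MaskinMono.gsp (hMM : MaskinMono f) : GSP f := by
  intro p p' M _ hout ⟨hweak, k, _, hk⟩
  let q : N → LinearOrder O := fun j => if j ∈ M then moveTop (p j) (f p' j) else p j
  have hqp' : f q = f p' := hMM p' q fun i b hb => by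
    by_cases hi : i ∈ M
    · rw [show q i = _ from if_pos hi]
      exact moveTop_lt_self (p i) (let := p' i; hb.ne)
    · rw [show q i = _ from if_neg hi, ← hout i hi]
      exact hb
  have hqp : f q = f p := hMM p q fun i b hb => by
    by_cases hi : i ∈ M
    · rw [show q i = _ from if_pos hi]
      exact moveTop_lt_of_lt (p i) ((wPref_iff_le (p i)).1 (hweak i hi)) hb
    · rwa [show q i = _ from if_neg hi]
  rw [← hqp, hqp'] at hk
  exact absurd hk (let := p k; lt_irrefl _)

theorem MaskinMono.apply_moveTop_eq (hMM : MaskinMono f) {p : N → LinearOrder O} {x : N → O}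
    (hx : ∀ i, (p i).le (f p i) (x i)) : f (fun i => moveTop (p i) (x i)) = f p :=
  hMM p _ fun i _ hb => moveTop_lt_of_lt (p i) (hx i) hb

theorem GSP.stratProof (hf : GSP f) : StratProof f := fun p p' i hout hi =>
  hf p p' {i} ⟨i, rfl⟩ hout ⟨fun _ hj => hj ▸ Or.inr hi, i, rfl, hi⟩

/-- Otherwise the coalition `{i, j}` could jointly make `i`'s change. -/
theorem GSP.not_lt_of_agree (hf : GSP f) {p p' : N → LinearOrder O} {i : N}
    (hout : ∀ l, l ≠ i → p' l = p l) (hfi : f p' i = f p i) (j : N) :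
    ¬ (p j).lt (f p j) (f p' j) := fun hj =>
  hf p p' {i, j} ⟨i, Or.inl rfl⟩ (fun _ hl => hout _ fun h => hl (Or.inl h))
    ⟨fun _ hl => hl.elim (fun h => h ▸ Or.inl hfi) (fun h => h ▸ Or.inr hj),
      j, Or.inr rfl, hj⟩

theorem GSP.nonbossy (hf : GSP f) : Nonbossy f := by
  intro p p' i hout hfi
  funext j
  by_cases hji : j = i
  · exact hji ▸ hfi
  have hle := hf.not_lt_of_agree hout hfi j
  have hge := hf.not_lt_of_agree (fun l hl => (hout l hl).symm) hfi.symm j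
  rw [hout j hji] at hge
  let := p j
  exact le_antisymm (not_lt.1 hle) (not_lt.1 hge)

theorem StratProof.apply_update_eq_of_nonbossy [DecidableEq N] (hSP : StratProof f)
    (hNB : Nonbossy f) (q : N → LinearOrder O) (a : N) (pia : LinearOrder O)
    (h : ∀ b, (q a).lt b (f q a) → pia.lt b (f q a)) :
    f (Function.update q a pia) = f q := by
  have hout : ∀ j, j ≠ a → Function.update q a pia j = q j := fun j hj =>
    Function.update_of_ne hj _ _
  refine hNB q _ a hout ?_
  have hup : ¬ (q a).lt (f q a) (f (Function.update q a pia) a) := hSP q _ a hout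
  have hdown : ¬ pia.lt (f (Function.update q a pia) a) (f q a) := by
    have h := hSP _ q a fun j hj => (hout j hj).symm
    rwa [sPref, Function.update_self] at h
  let := q a
  exact le_antisymm (not_lt.1 hup) (not_lt.1 fun hlt => hdown (h _ hlt))

theorem GSP.maskinMono [Fintype N] (hf : GSP f) : MaskinMono f := by
  intro p p' hmono
  have key : ∀ S : Finset N, f (fun i => if i ∈ S then p' i else p i) = f p := by
    intro S
    induction S using Finset.induction_on with
    | empty => simp
    | @insert a s ha ih =>
      set q : N → LinearOrder O := fun i => if i ∈ s then p' i else p i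
      have hq : (fun i => if i ∈ insert a s then p' i else p i) =
          Function.update q a (p' a) := by
        funext i
        by_cases hia : i = a
        · subst hia; simp
        · simp [q, hia]
      have hqa : q a = p a := if_neg ha
      rw [hq, hf.stratProof.apply_update_eq_of_nonbossy hf.nonbossy q a (p' a)
        (by rw [ih, hqa]; exact hmono a), ih]
  simpa using key Finset.univ

end Incentives

section LocalPriority

variable {N O : Type} [Fintype O] {C : Set (N → O)} {α : (N → O) → Set N}
  {p : N → LinearOrder O}

theorem lpStep_le (x : N → O) (i : N) : (p i).le (lpStep α p x i) (x i) := by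
  unfold lpStep
  split_ifs
  · exact bestLC_le _ _
  · exact (p i).le_refl _

theorem lpStep_lt {x : N → O} {i : N} (hnf : lpNoFail α p x) (hi : i ∈ α x) :
    (p i).lt (lpStep α p x i) (x i) := by
  simpa only [lpStep, if_pos hi] using bestLC_lt _ (hnf i hi)

theorem le_of_lpStep_run {m : ℕ} {x : ℕ → N → O}
    (hx : ∀ t < m, x (t + 1) = lpStep α p (x t)) (i : N) {s t : ℕ} (hst : s ≤ t) (htm : t ≤ m) : (p i).le (x t i) (x s i) := by
  let := p i
  induction t, hst using Nat.le_induction with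
  | base => exact le_rfl
  | succ t _ ih =>
    rw [hx t htm]
    exact (lpStep_le (x t) i).trans (ih (Nat.le_of_succ_le htm))

theorem lpRunsTo.eq_tau1 [Nonempty O] {y : N → O} (h : lpRunsTo C α p y) (hC : tau1 p ∈ C) :
    y = tau1 p := by
  obtain ⟨m, x, hx0, hrun, rfl, _⟩ := h
  rcases Nat.eq_zero_or_pos m with rfl | hm
  · exact hx0
  · exact absurd (hx0 ▸ hC) (hrun 0 hm).1

theorem lpRunsTo.lt_tau1 [Nonempty O] {y : N → O} (h : lpRunsTo C α p y) (hC : tau1 p ∉ C)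
    {i : N} (hi : i ∈ α (tau1 p)) : (p i).lt (y i) (tau1 p i) := by
  obtain ⟨m, x, hx0, hrun, rfl, hyC⟩ := h
  have hm : 0 < m := Nat.pos_of_ne_zero fun hm => hC (hx0 ▸ hm ▸ hyC)
  obtain ⟨-, hnf, hx1⟩ := hrun 0 hm
  rw [hx0] at hnf hx1
  let := p i
  calc x m i ≤ x 1 i := le_of_lpStep_run (fun t ht => (hrun t ht).2.2) i hm le_rfl
    _ < tau1 p i := hx1 ▸ lpStep_lt hnf hi

theorem sum_card_LCfin_lpStep_lt [Fintype N] {x : N → O} (hne : (α x).Nonempty)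
    (hnf : lpNoFail α p x) :
    ∑ i, (LCfin (p i) (lpStep α p x i)).card < ∑ i, (LCfin (p i) (x i)).card := by
  obtain ⟨i, hi⟩ := hne
  exact Finset.sum_lt_sum (fun j _ => card_LCfin_le_of_le _ (lpStep_le x j))
    ⟨i, Finset.mem_univ i, card_LCfin_lt_of_lt _ (lpStep_lt hnf hi)⟩

theorem exists_lpRunsTo_iterate [Fintype N] [Nonempty O] (hα : ∀ x, x ∉ C → (α x).Nonempty)
    (hnf : ∀ t, (lpStep α p)^[t] (tau1 p) ∉ C → lpNoFail α p ((lpStep α p)^[t] (tau1 p))) :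
    ∃ m, lpRunsTo C α p ((lpStep α p)^[m] (tau1 p)) := by
  have hterm : ∃ t, (lpStep α p)^[t] (tau1 p) ∈ C := by
    by_contra! h
    refine not_strictAnti_of_wellFoundedLT
      (fun t => ∑ i, (LCfin (p i) ((lpStep α p)^[t] (tau1 p) i)).card)
      (strictAnti_nat_of_succ_lt fun t => ?_)
    simp only [Function.iterate_succ_apply']
    exact sum_card_LCfin_lpStep_lt (hα _ (h t)) (hnf t (h t))
  have hmin : ∀ t < Nat.find hterm, (lpStep α p)^[t] (tau1 p) ∉ C := fun _ =>
    Nat.find_min hterm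
  exact ⟨Nat.find hterm, Nat.find hterm, fun t => (lpStep α p)^[t] (tau1 p), rfl,
    fun t ht => ⟨hmin t ht, hnf t (hmin t ht), Function.iterate_succ_apply' _ _ _⟩, rfl,
    Nat.find_spec hterm⟩

variable [Nonempty O] {f : (N → LinearOrder O) → N → O}

theorem lpInduces.unanimity (h : lpInduces C α f) : Unanimity C f := fun p hp =>
  (h.2 p).eq_tau1 hp

theorem lpInduces.fixedComp (h : lpInduces C α f) : FixedComp C f := by
  intro μ hμ
  obtain ⟨i, hi⟩ := (h.1 μ).1 hμ
  refine ⟨i, fun p hp => ?_⟩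
  subst hp
  exact (let := p i; ((h.2 p).lt_tau1 hμ hi).ne)

end LocalPriority

section Construction

variable {N O : Type} [Fintype O] [Nonempty O] {C : Set (N → O)}
  {f : (N → LinearOrder O) → N → O} {p : N → LinearOrder O} {x : N → O}

def fixedCompromisers (C : Set (N → O)) (f : (N → LinearOrder O) → N → O) :
    (N → O) → Set N :=
  fun x => if x ∈ C then ∅ else {i | ∀ q, tau1 q = x → f q i ≠ x i}

theorem mem_fixedCompromisers (hx : x ∉ C) {i : N} :
    i ∈ fixedCompromisers C f x ↔ ∀ q, tau1 q = x → f q i ≠ x i := by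
  simp [fixedCompromisers, hx]

theorem isLCA_fixedCompromisers (hFC : FixedComp C f) : IsLCA C (fixedCompromisers C f) := by
  intro x
  constructor
  · intro hx
    obtain ⟨i, hi⟩ := hFC x hx
    exact ⟨i, (mem_fixedCompromisers hx).2 hi⟩
  · intro hx
    simp [fixedCompromisers, hx]

theorem tau1_moveTop (p : N → LinearOrder O) (x : N → O) :
    tau1 (fun i => moveTop (p i) (x i)) = x :=
  funext fun i => topObj_moveTop (p i) (x i)

theorem MaskinMono.lt_of_mem_fixedCompromisers (hMM : MaskinMono f)
    (hx : ∀ i, (p i).le (f p i) (x i)) {i : N} (hi : i ∈ fixedCompromisers C f x) :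
    (p i).lt (f p i) (x i) := by
  have hxC : x ∉ C := fun h => by simp [fixedCompromisers, h] at hi
  have hne : f p i ≠ x i := by
    simpa only [hMM.apply_moveTop_eq hx] using
      (mem_fixedCompromisers hxC).1 hi _ (tau1_moveTop p x)
  let := p i
  exact lt_of_le_of_ne (hx i) hne

theorem MaskinMono.lpNoFail_fixedCompromisers (hMM : MaskinMono f)
    (hx : ∀ i, (p i).le (f p i) (x i)) : lpNoFail (fixedCompromisers C f) p x := fun i hi =>
  ⟨f p i, (mem_LCfin _).2 (hMM.lt_of_mem_fixedCompromisers hx hi)⟩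

theorem MaskinMono.le_lpStep_fixedCompromisers (hMM : MaskinMono f)
    (hx : ∀ i, (p i).le (f p i) (x i)) (i : N) :
    (p i).le (f p i) (lpStep (fixedCompromisers C f) p x i) := by
  unfold lpStep
  split_ifs with hi
  · exact le_bestLC _ (hMM.lt_of_mem_fixedCompromisers hx hi)
  · exact hx i

theorem MaskinMono.le_iterate_lpStep_fixedCompromisers (hMM : MaskinMono f) (t : ℕ) (i : N) :
    (p i).le (f p i) ((lpStep (fixedCompromisers C f) p)^[t] (tau1 p) i) := by
  induction t generalizing i with
  | zero => exact le_topObj _ _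
  | succ t ih =>
    rw [Function.iterate_succ_apply']
    exact hMM.le_lpStep_fixedCompromisers ih i

theorem lpInduces_fixedCompromisers [Fintype N] (hU : Unanimity C f) (hFC : FixedComp C f)
    (hMM : MaskinMono f) : lpInduces C (fixedCompromisers C f) f := by
  refine ⟨isLCA_fixedCompromisers hFC, fun p => ?_⟩
  have hle := hMM.le_iterate_lpStep_fixedCompromisers (C := C) (p := p)
  obtain ⟨m, hm⟩ := exists_lpRunsTo_iterate (fun x hx => (isLCA_fixedCompromisers hFC x).1 hx)
    fun t _ => hMM.lpNoFail_fixedCompromisers (hle t)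
  obtain ⟨-, -, -, -, -, hmC⟩ := id hm
  -- The run ends at a feasible allocation that `f` also chooses at a profile topped by it.
  have hf : f p = (lpStep (fixedCompromisers C f) p)^[m] (tau1 p) := by
    rw [← hMM.apply_moveTop_eq (hle m), hU _ (by rwa [tau1_moveTop]), tau1_moveTop]
  rwa [hf]

end Construction

theorem gsp_localPriority_characterization_general
    {N O : Type} [Fintype N] [Fintype O] [Nonempty O]
    (C : Set (N → O))
    (f : (N → LinearOrder O) → N → O) :
    (GSP f ∧ ∃ α, lpInduces C α f) ↔
      (Unanimity C f ∧ FixedComp C f ∧ MaskinMono f) := by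
  constructor
  · rintro ⟨hGSP, α, hα⟩
    exact ⟨hα.unanimity, hα.fixedComp, hGSP.maskinMono⟩
  · rintro ⟨hU, hFC, hMM⟩
    exact ⟨hMM.gsp, fixedCompromisers C f, lpInduces_fixedCompromisers hU hFC hMM⟩

/-- Corollary 1: `f` is a group strategy-proof local priority mechanism
iff it satisfies Unanimity, the Fixed compromiser condition, and Maskin monotonicity. -/
theorem gsp_localPriority_characterization
    {N O : Type} [Fintype N] [Fintype O] [Nonempty O]
    (C : Set (N → O)) (hC : C.Nonempty)
    (f : (N → LinearOrder O) → N → O) (hf : ∀ p, f p ∈ C) :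
    (GSP f ∧ ∃ α, lpInduces C α f) ↔
      (Unanimity C f ∧ FixedComp C f ∧ MaskinMono f) :=
  gsp_localPriority_characterization_general C f
end

section
/- In any school choice problem, define α(x) = {i ∈ N : |{j ∈ N : x_j = x_i and j >_{x_i} i}| ≥ q_{x_i}} for every allocation x. Then α is an implementable local compromiser assignment for the school choice constraint C and LP_α = DA; in particular, the deferred acceptance mechanism for school choice is a local priority mechanism. -/
/- Common framework: constrained allocation, local priority mechanisms
   (Root & Ahn, "Local Priority Mechanisms"). Agents `N`, objects `O`.
   A strict preference is encoded as a `LinearOrder` on `O`, where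
   `pi.lt b a` means `a` is strictly preferred to `b`. -/

open Classical

noncomputable section

variable {N O : Type}

/-- The school choice constraint: no school is over its capacity. -/
def SchoolC [Fintype O] (q : O → ℕ) : Set (N → O) :=
  {μ | ∀ s : O, Set.ncard {i : N | μ i = s} ≤ q s}

/-- In the cumulative deferred acceptance algorithm, with cumulative rejection set `R`,
student `i` applies to her favourite school that has not yet rejected her. -/
def daApp [Fintype O] [Nonempty O] (p : N → LinearOrder O) (R : Set (N × O)) (i : N) : O :=
  if h : (Finset.univ.filter fun s : O => (i, s) ∉ R).Nonempty
  then @Finset.max' O (p i) _ h else Classical.arbitrary O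

/-- The rejections of the current round: `i` is rejected by the school `s` she applies
to if at least `q s` students with higher `>_s`-priority also apply to `s` this round. -/
def daRej [Fintype O] [Nonempty O] (q : O → ℕ) (pr : O → LinearOrder N)
    (p : N → LinearOrder O) (R : Set (N × O)) : Set (N × O) :=
  {is : N × O | daApp p R is.1 = is.2 ∧
    q is.2 ≤ Set.ncard {j : N | daApp p R j = is.2 ∧ (pr is.2).lt is.1 j}}

/-- The cumulative deferred acceptance algorithm at profile `p` terminates with the
allocation `μ`: rejections accumulate round by round until a round with no rejections,
and `μ` assigns each student to the school she applies to in that round. -/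
def DARuns [Fintype O] [Nonempty O] (q : O → ℕ) (pr : O → LinearOrder N)
    (p : N → LinearOrder O) (μ : N → O) : Prop :=
  ∃ (m : ℕ) (R : ℕ → Set (N × O)),
    R 0 = ∅ ∧
    (∀ t < m, daRej q pr p (R t) ≠ ∅ ∧ R (t + 1) = R t ∪ daRej q pr p (R t)) ∧
    daRej q pr p (R m) = ∅ ∧
    μ = fun i => daApp p (R m) i

end

/-! Along deferred acceptance, the rejections received so far are exactly the pairs `(i, s)` with
`s` preferred by `i` to her tentative school, and the students rejected in a round are exactly the
local compromisers of the tentative allocation; so each round of DA is a step of the local priority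
algorithm. It never fails: a school that has rejected someone stays full, so a compromiser with
nothing left below her tentative school would put more than `∑ q` students into schools. -/

section Priority

variable {α : Type} [LinearOrder α] [Finite α]

lemma ncard_sep_lt_lt {S : Set α} {i : α} (hi : i ∈ S) : {j ∈ S | i < j}.ncard < S.ncard :=
  Set.ncard_lt_ncard ⟨Set.sep_subset _ _, fun h => lt_irrefl i (h hi).2⟩

lemma exists_le_ncard_sep_lt {S : Set α} {k : ℕ} (hk : k < S.ncard) :
    ∃ i ∈ S, k ≤ {j ∈ S | i < j}.ncard := by
  obtain ⟨i, hi⟩ := S.toFinite.exists_minimal (Set.nonempty_of_ncard_ne_zero (by omega))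
  have hsep : {j ∈ S | i < j} = S \ {i} := by
    ext j
    simp only [Set.mem_sep_iff, Set.mem_sdiff, Set.mem_singleton_iff]
    exact ⟨fun h => ⟨h.1, h.2.ne'⟩,
      fun h => ⟨h.1, lt_of_le_of_ne (not_lt.mp (hi.not_lt h.1)) (Ne.symm h.2)⟩⟩
  refine ⟨i, hi.prop, ?_⟩
  rw [hsep, Set.ncard_sdiff_singleton_of_mem hi.prop]
  omega

lemma le_ncard_sep_not {S : Set α} {P : α → Prop} {k : ℕ} (hS : k ≤ S.ncard)
    (hP : ∀ i ∈ S, P i → k ≤ {j ∈ S | i < j}.ncard) : k ≤ {j ∈ S | ¬ P j}.ncard := by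
  rcases {i ∈ S | P i}.eq_empty_or_nonempty with hnone | hsome
  · have hall : {j ∈ S | ¬ P j} = S :=
      Set.sep_eq_self_iff_mem_true.mpr fun j hj hPj =>
        (Set.eq_empty_iff_forall_notMem.mp hnone) j ⟨hj, hPj⟩
    rwa [hall]
  · -- the `P`-member of highest rank sees only non-`P` members above it
    obtain ⟨i, hi⟩ := ({i ∈ S | P i}.toFinite).exists_maximal hsome
    exact (hP i hi.prop.1 hi.prop.2).trans
      (Set.ncard_le_ncard fun j hj => ⟨hj.1, fun hPj => hi.not_gt ⟨hj.1, hPj⟩ hj.2⟩)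

end Priority

section LocalPriority

variable {N O : Type} [Fintype O]

/-- Along deferred acceptance, these are exactly the rejections received so far. -/
def preferredPairs (p : N → LinearOrder O) (x : N → O) : Set (N × O) :=
  {is | (p is.1).lt (x is.1) is.2}

lemma preferredPairs_tau1 [Nonempty O] (p : N → LinearOrder O) :
    preferredPairs p (tau1 p) = ∅ := by
  refine Set.eq_empty_iff_forall_notMem.mpr fun ⟨i, s⟩ h => ?_
  let := p i
  exact not_lt.mpr (Finset.le_max' _ s (Finset.mem_univ s)) h

lemma lt_bestLC_iff {pi : LinearOrder O} {a : O} (h : (LCfin pi a).Nonempty) (s : O) :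
    pi.lt (bestLC pi a) s ↔ pi.le a s := by
  let := pi
  rw [bestLC, dif_pos h]
  refine (Finset.max'_lt_iff _ h).trans ⟨fun hs => ?_, fun hs b hb => ?_⟩
  · by_contra hsa
    exact lt_irrefl s (hs s (by simpa [LCfin] using hsa))
  · exact lt_of_lt_of_le (by simpa [LCfin] using hb) hs

lemma preferredPairs_lpStep {α : (N → O) → Set N} {p : N → LinearOrder O} {x : N → O}
    (h : lpNoFail α p x) :
    preferredPairs p (lpStep α p x) = preferredPairs p x ∪ (fun i => (i, x i)) '' α x := by
  ext ⟨i, s⟩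
  simp only [preferredPairs, lpStep, Set.mem_union, Set.mem_ofPred_eq, Set.mem_image,
    Prod.mk.injEq]
  let := p i
  by_cases hi : i ∈ α x
  · rw [if_pos hi]
    refine (lt_bestLC_iff (h i hi) s).trans ?_
    simp only [le_iff_lt_or_eq]
    aesop
  · rw [if_neg hi]
    aesop

lemma daApp_preferredPairs [Nonempty O] (p : N → LinearOrder O) (x : N → O) :
    daApp p (preferredPairs p x) = x := by
  funext i
  let := p i
  have hne : (Finset.univ.filter fun s : O => (i, s) ∉ preferredPairs p x).Nonempty :=
    ⟨x i, by simp [preferredPairs]⟩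
  rw [daApp, dif_pos hne]
  refine le_antisymm (Finset.max'_le _ _ _ fun s hs => ?_) (Finset.le_max' _ _ ?_)
  · simpa [preferredPairs] using hs
  · simp [preferredPairs]

end LocalPriority

lemma sum_ncard_fiber {N O : Type} [Fintype N] [Fintype O] (x : N → O) :
    ∑ s, Set.ncard {j | x j = s} = Fintype.card N := by
  simp only [Set.ncard_eq_toFinset_card', Set.toFinset_ofPred]
  exact (Finset.card_eq_sum_card_fiberwise fun j _ => Finset.mem_univ (x j)).symm

section SchoolChoice

variable {N O : Type} (q : O → ℕ) (pr : O → LinearOrder N)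

def schoolCompromisers (x : N → O) : Set N :=
  {i | q (x i) ≤ Set.ncard {j | x j = x i ∧ (pr (x i)).lt i j}}

def PreferredSchoolsFull (p : N → LinearOrder O) (x : N → O) : Prop :=
  ∀ i s, (p i).lt (x i) s → q s ≤ Set.ncard {j | x j = s}

variable [Fintype O]

lemma daRej_preferredPairs [Nonempty O] (p : N → LinearOrder O) (x : N → O) :
    daRej q pr p (preferredPairs p x) = (fun i => (i, x i)) '' schoolCompromisers q pr x := by
  ext ⟨i, s⟩
  simp only [daRej, daApp_preferredPairs, schoolCompromisers, Set.mem_ofPred_eq, Set.mem_image,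
    Prod.mk.injEq]
  constructor
  · rintro ⟨rfl, h⟩
    exact ⟨i, h, rfl, rfl⟩
  · rintro ⟨i, h, rfl, rfl⟩
    exact ⟨rfl, h⟩

variable [Fintype N]

theorem isLCA_schoolCompromisers : IsLCA (SchoolC q) (schoolCompromisers q pr) := by
  intro x
  constructor
  · intro hx
    obtain ⟨s, hs⟩ : ∃ s, q s < Set.ncard {j | x j = s} := by
      simpa [SchoolC] using hx
    let := pr s
    obtain ⟨i, rfl, hi⟩ := exists_le_ncard_sep_lt hs
    exact ⟨i, hi⟩
  · intro hx
    refine Set.eq_empty_iff_forall_notMem.mpr fun i hi => ?_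
    let := pr (x i)
    exact lt_irrefl _
      ((hi.trans_lt (ncard_sep_lt_lt (S := {j | x j = x i}) rfl)).trans_le (hx (x i)))

variable {q pr}

lemma lpNoFail_schoolCompromisers (hq : Fintype.card N ≤ ∑ s, q s) {p : N → LinearOrder O}
    {x : N → O} (hx : PreferredSchoolsFull q p x) : lpNoFail (schoolCompromisers q pr) p x := by
  -- otherwise every other school is preferred, hence full, and her own is over capacity
  intro k hk
  by_contra hbot
  have hover : q (x k) < Set.ncard {j | x j = x k} := by
    let := pr (x k)
    exact hk.trans_lt (ncard_sep_lt_lt (S := {j | x j = x k}) rfl)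
  have hfull : ∀ s, q s ≤ Set.ncard {j | x j = s} := by
    intro s
    rcases eq_or_ne s (x k) with rfl | hs
    · exact hover.le
    · let := p k
      exact hx k s (lt_of_le_of_ne (not_lt.mp fun h => hbot ⟨s, by simpa [LCfin]⟩) hs.symm)
  have := Finset.sum_lt_sum (fun s _ => hfull s) ⟨x k, Finset.mem_univ _, hover⟩
  rw [sum_ncard_fiber] at this
  omega

lemma le_ncard_lpStep_eq {p : N → LinearOrder O} {x : N → O} {s : O}
    (hs : q s ≤ Set.ncard {j | x j = s}) :
    q s ≤ Set.ncard {j | lpStep (schoolCompromisers q pr) p x j = s} := by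
  let := pr s
  -- the `q s` students of highest priority at `s` are not compromisers, so they stay
  have hstay := le_ncard_sep_not (S := {j | x j = s}) (P := (· ∈ schoolCompromisers q pr x)) hs
    fun i hi hPi => by
      rw [Set.mem_ofPred_eq] at hi
      rw [schoolCompromisers, Set.mem_ofPred_eq, hi] at hPi
      exact hPi
  refine hstay.trans (Set.ncard_le_ncard fun j hj => ?_)
  simpa [lpStep, hj.2] using hj.1

lemma preferredSchoolsFull_lpStep {p : N → LinearOrder O} {x : N → O}
    (hx : PreferredSchoolsFull q p x) (hnf : lpNoFail (schoolCompromisers q pr) p x) :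
    PreferredSchoolsFull q p (lpStep (schoolCompromisers q pr) p x) := by
  intro i s hs
  apply le_ncard_lpStep_eq
  have hmem : (i, s) ∈ preferredPairs p (lpStep (schoolCompromisers q pr) p x) := hs
  rw [preferredPairs_lpStep hnf] at hmem
  rcases hmem with hlt | ⟨k, hk, hks⟩
  · exact hx i s hlt
  · obtain ⟨rfl, rfl⟩ := Prod.mk.inj hks
    exact hk.trans (Set.ncard_le_ncard fun j hj => hj.1)

theorem lpRunsTo_of_DARuns [Nonempty O] (hq : Fintype.card N ≤ ∑ s, q s)
    {p : N → LinearOrder O} {μ : N → O} (h : DARuns q pr p μ) :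
    lpRunsTo (SchoolC q) (schoolCompromisers q pr) p μ := by
  obtain ⟨m, R, hR0, hstep, hstop, rfl⟩ := h
  let x : ℕ → N → O := fun t => (lpStep (schoolCompromisers q pr) p)^[t] (tau1 p)
  have hx_succ : ∀ t, x (t + 1) = lpStep (schoolCompromisers q pr) p (x t) :=
    fun t => Function.iterate_succ_apply' _ _ _
  have inv : ∀ t ≤ m, R t = preferredPairs p (x t) ∧ PreferredSchoolsFull q p (x t) := by
    intro t
    induction t with
    | zero =>
      intro _
      refine ⟨hR0.trans (preferredPairs_tau1 p).symm, fun i s hs => ?_⟩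
      exact (Set.eq_empty_iff_forall_notMem.mp (preferredPairs_tau1 p) (i, s) hs).elim
    | succ t ih =>
      intro ht
      obtain ⟨hR, hfull⟩ := ih (by omega)
      have hnf : lpNoFail (schoolCompromisers q pr) p (x t) :=
        lpNoFail_schoolCompromisers hq hfull
      refine ⟨?_, hx_succ t ▸ preferredSchoolsFull_lpStep hfull hnf⟩
      rw [(hstep t ht).2, hR, daRej_preferredPairs, hx_succ, preferredPairs_lpStep hnf]
  have hrej : ∀ t ≤ m,
      daRej q pr p (R t) = (fun i => (i, x t i)) '' schoolCompromisers q pr (x t) :=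
    fun t ht => by rw [(inv t ht).1, daRej_preferredPairs]
  have hfinal : (fun i => daApp p (R m) i) = x m := by
    rw [(inv m le_rfl).1, daApp_preferredPairs]
  refine ⟨m, x, rfl, fun t ht => ⟨fun hC => ?_, lpNoFail_schoolCompromisers hq (inv t ht.le).2,
    hx_succ t⟩, hfinal.symm, hfinal ▸ by_contra fun hC => ?_⟩
  · have hne := (hstep t ht).1
    rw [hrej t ht.le, ((isLCA_schoolCompromisers q pr) _).2 hC, Set.image_empty] at hne
    exact hne rfl
  · have hnone := hstop
    rw [hrej m le_rfl, Set.image_eq_empty] at hnone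
    exact ((isLCA_schoolCompromisers q pr) _).1 hC |>.ne_empty hnone

end SchoolChoice

/-- Proposition 2: deferred acceptance for school choice is a local
priority mechanism, induced by the local compromiser assignment that makes `i` a
compromiser at `x` exactly when at least `q_{x i}` students with higher priority at
`x i` are also assigned to `x i`. -/
theorem deferredAcceptance_isLocalPriority
    {N O : Type} [Fintype N] [Fintype O] [Nonempty O]
    (q : O → ℕ) (pr : O → LinearOrder N)
    (hq : Fintype.card N ≤ ∑ s : O, q s)
    (DA : (N → LinearOrder O) → N → O)
    (hDA : ∀ p, DARuns q pr p (DA p)) :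
    lpInduces (SchoolC q)
      (fun x => {i : N | q (x i) ≤ Set.ncard {j : N | x j = x i ∧ (pr (x i)).lt i j}})
      DA :=
  ⟨isLCA_schoolCompromisers q pr, fun p => lpRunsTo_of_DARuns hq (hDA p)⟩
end

section
/- There exist a finite agent set N with |N| = 3, an object set O with |O| = 3, a constraint C ⊆ O^N, and an implementable local compromiser assignment α for C such that the local priority mechanism LP_α is Pareto efficient but not group strategy-proof. -/
/- Common framework: constrained allocation, local priority mechanisms
   (Root & Ahn, "Local Priority Mechanisms"). Agents `N`, objects `O`.
   A strict preference is encoded as a `LinearOrder` on `O`, where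
   `pi.lt b a` means `a` is strictly preferred to `b`. -/

open Classical

/-!
The constraint forbids `(0,0,0)`, `(0,0,1)`, `(0,1,1)` and `(0,2,1)`, whose sole compromisers
are agents 1, 2, 0 and 2. From `τ₁` the algorithm makes one compromise, or two along
`(0,0,1) → (0,0,0) → (0,v,0)`, each time moving an agent from her first to her second choice.
So only allocations giving every agent her first choice or her outcome are weakly preferred by
all, and all of these but the outcome are infeasible: the mechanism is Pareto efficient. It is
not group strategy-proof because agent 1 is bossy: by ranking object 1 first she makes agent 0
compromise instead of agents 2 and 1, keeps her object, and agent 2 gets her favourite.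
-/

open Function

namespace LocalPriority

variable {N O : Type}

section Preferences

variable [Fintype O] (pi : LinearOrder O)

lemma le_topObj [Nonempty O] (b : O) : pi.le b (topObj pi) :=
  @Finset.le_max' O pi _ b (Finset.mem_univ b)

lemma topObj_eq [Nonempty O] {a : O} (h : ∀ b, b ≠ a → pi.lt b a) : topObj pi = a := by
  let _ := pi
  by_contra hne
  exact (h _ hne).not_ge (le_topObj pi a)

lemma bestLC_lt {a : O} (h : (LCfin pi a).Nonempty) : pi.lt (bestLC pi a) a := by
  rw [bestLC, dif_pos h]
  exact (Finset.mem_filter.1 (@Finset.max'_mem O pi _ h)).2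

lemma le_bestLC {a b : O} (h : pi.lt b a) : pi.le b (bestLC pi a) := by
  have hb : b ∈ LCfin pi a := by simpa [LCfin] using h
  rw [bestLC, dif_pos ⟨b, hb⟩]
  exact @Finset.le_max' O pi _ b hb

lemma bestLC_eq {a c : O} (hc : pi.lt c a) (h : ∀ b, pi.lt b a → pi.le b c) :
    bestLC pi a = c := by
  let _ := pi
  have hne : (LCfin pi a).Nonempty := ⟨c, by simpa [LCfin] using hc⟩
  refine le_antisymm ?_ (le_bestLC pi hc)
  rw [bestLC, dif_pos hne]
  exact Finset.max'_le _ hne c fun b hb => h b (by simpa [LCfin] using hb)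

lemma LCfin_topObj_nonempty [Nontrivial O] : (LCfin pi (topObj pi)).Nonempty := by
  let _ := pi
  obtain ⟨b, hb⟩ := exists_ne (topObj pi)
  exact ⟨b, by simpa [LCfin] using lt_of_le_of_ne (le_topObj pi b) hb⟩

lemma eq_topObj_or_eq_of_wPref [Nonempty O] {a b : O}
    (hb : b = topObj pi ∨ b = bestLC pi (topObj pi)) (h : wPref pi a b) :
    a = topObj pi ∨ a = b := by
  let _ := pi
  rcases h with rfl | hba
  · exact Or.inr rfl
  by_contra! hne
  have hlt : a < topObj pi := lt_of_le_of_ne (le_topObj pi a) hne.1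
  rcases hb with rfl | rfl
  · exact lt_asymm hba hlt
  · exact (le_bestLC pi hlt).not_gt hba

end Preferences

def tau2 [Fintype O] [Nonempty O] (p : N → LinearOrder O) : N → O :=
  fun i => bestLC (p i) (tau1 p i)

lemma tau2_ne_tau1 [Fintype O] [Nontrivial O] (p : N → LinearOrder O) (i : N) :
    tau2 p i ≠ tau1 p i :=
  let _ := p i
  ne_of_lt (bestLC_lt (p i) (LCfin_topObj_nonempty (p i)))

section Algorithm

variable [Fintype O] (C : Set (N → O)) (α : (N → O) → Set N) (p : N → LinearOrder O)

/-- `LPRun C α p x y`: the local priority algorithm started at `x` stops at the feasible `y`. -/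
inductive LPRun : (N → O) → (N → O) → Prop
  | feasible {x : N → O} : x ∈ C → LPRun x x
  | step {x y : N → O} : x ∉ C → lpNoFail α p x → LPRun (lpStep α p x) y → LPRun x y

variable {C α p}

lemma LPRun.unique {x y y' : N → O} (h : LPRun C α p x y) (h' : LPRun C α p x y') : y = y' := by
  induction h with
  | feasible hx =>
    cases h' with
    | feasible _ => rfl
    | step hx' _ _ => exact absurd hx hx'
  | step hx _ _ ih =>
    cases h' with
    | feasible hx' => exact absurd hx' hx
    | step _ _ h' => exact ih h'

lemma LPRun.exists_seq {x y : N → O} (h : LPRun C α p x y) :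
    ∃ (m : ℕ) (z : ℕ → N → O), z 0 = x ∧
      (∀ t < m, z t ∉ C ∧ lpNoFail α p (z t) ∧ z (t + 1) = lpStep α p (z t)) ∧
      z m = y ∧ y ∈ C := by
  induction h with
  | @feasible x hx => exact ⟨0, fun _ => x, rfl, fun t ht => absurd ht t.not_lt_zero, rfl, hx⟩
  | @step x y hx hnf _ ih =>
    obtain ⟨m, z, hz0, hz, hzm, hy⟩ := ih
    refine ⟨m + 1, fun | 0 => x | t + 1 => z t, rfl, ?_, hzm, hy⟩
    rintro (_ | t) ht
    · exact ⟨hx, hnf, hz0⟩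
    · exact hz t (by omega)

lemma lpRun_of_seq : ∀ {m : ℕ} {z : ℕ → N → O},
    (∀ t < m, z t ∉ C ∧ lpNoFail α p (z t) ∧ z (t + 1) = lpStep α p (z t)) →
      z m ∈ C → LPRun C α p (z 0) (z m)
  | 0, _, _, hm => .feasible hm
  | m + 1, z, hz, hm => by
    obtain ⟨h0, hnf, h1⟩ := hz 0 m.succ_pos
    refine .step h0 hnf (h1 ▸ ?_)
    exact lpRun_of_seq (z := fun t => z (t + 1)) (fun t ht => hz (t + 1) (by omega)) hm

variable [Nonempty O]

lemma lpRunsTo_iff {y : N → O} : lpRunsTo C α p y ↔ LPRun C α p (tau1 p) y := by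
  constructor
  · rintro ⟨m, z, hz0, hz, rfl, hm⟩
    exact hz0 ▸ lpRun_of_seq hz hm
  · intro h
    exact h.exists_seq

lemma LPmech_eq_of_lpRun {y : N → O} (h : LPRun C α p (tau1 p) y) : LPmech C α p = y := by
  have hex : ∃ y, lpRunsTo C α p y := ⟨y, lpRunsTo_iff.2 h⟩
  rw [LPmech, dif_pos hex]
  exact (lpRunsTo_iff.1 hex.choose_spec).unique h

lemma lpInduces_LPmech (hα : IsLCA C α) (h : ∀ p, ∃ y, LPRun C α p (tau1 p) y) :
    lpInduces C α (LPmech C α) := by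
  refine ⟨hα, fun p => ?_⟩
  obtain ⟨y, hy⟩ := h p
  rw [LPmech_eq_of_lpRun hy]
  exact lpRunsTo_iff.2 hy

end Algorithm

section SingleCompromiser

variable {C : Set (N → O)} {c : (N → O) → N}

def singletonLCA (C : Set (N → O)) (c : (N → O) → N) : (N → O) → Set N :=
  fun x => {i | x ∉ C ∧ i = c x}

lemma isLCA_singletonLCA : IsLCA C (singletonLCA C c) :=
  fun x => ⟨fun hx => ⟨c x, hx, rfl⟩,
    fun hx => Set.eq_empty_of_forall_notMem fun _ hi => hi.1 hx⟩

variable [Fintype O]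

lemma LPRun.compromise [Nontrivial O] [DecidableEq N] {p : N → LinearOrder O} {x y : N → O}
    {i : N} (hx : x ∉ C) (hc : c x = i) (htop : x i = tau1 p i)
    (h : LPRun C (singletonLCA C c) p (update x i (tau2 p i)) y) :
    LPRun C (singletonLCA C c) p x y := by
  subst hc
  have hnf : lpNoFail (singletonLCA C c) p x := by
    rintro _ ⟨-, rfl⟩
    rw [htop]
    exact LCfin_topObj_nonempty _
  have hstep : lpStep (singletonLCA C c) p x = update x (c x) (tau2 p (c x)) := by
    funext k
    by_cases hk : k = c x
    · subst hk
      simp [lpStep, singletonLCA, hx, htop, tau2]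
    · simp [lpStep, singletonLCA, hk]
  exact .step hx hnf (hstep ▸ h)

end SingleCompromiser

lemma paretoEff_of_top_two_choices [Fintype O] [Nonempty O] {C : Set (N → O)}
    {f : (N → LinearOrder O) → N → O}
    (h : ∀ p, (∀ i, f p i = tau1 p i ∨ f p i = tau2 p i) ∧
      ∀ ν ∈ C, (∀ i, ν i = tau1 p i ∨ ν i = f p i) → ν = f p) :
    ParetoEff C f := by
  rintro p ⟨ν, hν, hw, k, hk⟩
  obtain ⟨htop, hbetween⟩ := h p
  obtain rfl := hbetween ν hν fun i => eq_topObj_or_eq_of_wPref (p i) (htop i) (hw i)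
  let _ := p k
  exact lt_irrefl _ hk

lemma eq_or_eq_update_of_forall [DecidableEq N] {x ν : N → O} {i : N} {v : O}
    (h : ∀ j, ν j = x j ∨ ν j = update x i v j) : ν = x ∨ ν = update x i v := by
  have hj : ∀ j, j ≠ i → ν j = x j := fun j hj => by simpa [hj] using h j
  rcases h i with hi | hi
  · exact Or.inl (funext fun j => if hji : j = i then hji ▸ hi else hj j hji)
  · refine Or.inr (funext fun j => if hji : j = i then hji ▸ hi else ?_)
    simpa [hji] using hj j hji

end LocalPriority

namespace LocalPriority.Example

abbrev C : Set (Fin 3 → Fin 3) :=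
  {x | x ∉ ({![0, 0, 0], ![0, 0, 1], ![0, 1, 1], ![0, 2, 1]} : Finset (Fin 3 → Fin 3))}

def compromiser (x : Fin 3 → Fin 3) : Fin 3 :=
  if x = ![0, 1, 1] then 0 else if x = ![0, 0, 0] then 1 else 2

abbrev alpha : (Fin 3 → Fin 3) → Set (Fin 3) := singletonLCA C compromiser

lemma update_compromiser_mem_or :
    ∀ x ∉ C, ∀ v ≠ x (compromiser x),
      update x (compromiser x) v ∈ C ∨ (x = ![0, 0, 1] ∧ v = 0) := by
  decide

lemma update_zero_one_mem : ∀ v : Fin 3, v ≠ 0 → update ![0, 0, 0] 1 v ∈ C := by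
  decide

lemma eq_of_mem_between : ∀ v : Fin 3, v ≠ 0 → ∀ ν ∈ C,
    (∀ i, ν i = ![0, 0, 1] i ∨ ν i = update ![0, 0, 0] 1 v i) →
      ν = update ![0, 0, 0] 1 v := by
  decide

variable (p : Fin 3 → LinearOrder (Fin 3))

lemma lpRun_one_step (ht : tau1 p ∉ C)
    (hy : update (tau1 p) (compromiser (tau1 p)) (tau2 p (compromiser (tau1 p))) ∈ C) :
    LPRun C alpha p (tau1 p)
      (update (tau1 p) (compromiser (tau1 p)) (tau2 p (compromiser (tau1 p)))) :=
  .compromise ht rfl rfl (.feasible hy)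

lemma lpRun_two_steps (ht : tau1 p = ![0, 0, 1]) (hs : tau2 p 2 = 0) :
    LPRun C alpha p (tau1 p) (update ![0, 0, 0] 1 (tau2 p 1)) := by
  have h1 : tau1 p 1 = 0 := by rw [ht]; rfl
  refine .compromise (i := 2) (by rw [ht]; decide) (by rw [ht]; decide) rfl ?_
  rw [hs, ht, show update ![0, 0, 1] 2 (0 : Fin 3) = ![0, 0, 0] by decide]
  refine .compromise (i := 1) (by decide) (by decide) h1.symm (.feasible ?_)
  exact update_zero_one_mem _ (h1 ▸ tau2_ne_tau1 p 1)

lemma exists_lpRun_top_two :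
    ∃ y, LPRun C alpha p (tau1 p) y ∧ (∀ i, y i = tau1 p i ∨ y i = tau2 p i) ∧
      ∀ ν ∈ C, (∀ i, ν i = tau1 p i ∨ ν i = y i) → ν = y := by
  by_cases ht : tau1 p ∈ C
  · refine ⟨tau1 p, .feasible ht, fun i => .inl rfl, fun ν _ h => ?_⟩
    exact funext fun i => (h i).elim id id
  rcases update_compromiser_mem_or _ ht _ (tau2_ne_tau1 p _) with hy | ⟨ht2, hs⟩
  · refine ⟨_, lpRun_one_step p ht hy, fun j => ?_, fun ν hν h => ?_⟩
    · by_cases hj : j = compromiser (tau1 p)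
      · subst hj; simp
      · simp [hj]
    · exact (eq_or_eq_update_of_forall h).resolve_left fun h => ht (h ▸ hν)
  · rw [ht2] at hs
    have h1 : tau1 p 1 = 0 := by rw [ht2]; rfl
    refine ⟨_, lpRun_two_steps p ht2 hs, fun j => ?_, fun ν hν h => ?_⟩
    · fin_cases j
      · exact .inl (by rw [ht2]; rfl)
      · exact .inr rfl
      · exact .inr hs.symm
    · exact eq_of_mem_between _ (h1 ▸ tau2_ne_tau1 p 1) ν hν (ht2 ▸ h)

-- Objects are ranked by their scores, higher being better: `pref012` is `0 ≻ 1 ≻ 2`.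
abbrev pref012 : LinearOrder (Fin 3) := LinearOrder.lift' ![2, 1, 0] (by decide)
abbrev pref102 : LinearOrder (Fin 3) := LinearOrder.lift' ![1, 2, 0] (by decide)

lemma topObj_pref012 : topObj pref012 = 0 := topObj_eq _ (by decide)
lemma topObj_pref102 : topObj pref102 = 1 := topObj_eq _ (by decide)
lemma bestLC_pref012 : bestLC pref012 0 = 1 := bestLC_eq _ (by decide) (by decide)
lemma bestLC_pref102 : bestLC pref102 1 = 0 := bestLC_eq _ (by decide) (by decide)

lemma LPmech_truthful : LPmech C alpha ![pref012, pref012, pref102] = ![0, 1, 0] := by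
  have ht : tau1 ![pref012, pref012, pref102] = ![0, 0, 1] := by
    funext i; fin_cases i <;> simp [tau1, topObj_pref012, topObj_pref102]
  have hs1 : tau2 ![pref012, pref012, pref102] 1 = 1 := by simp [tau2, ht, bestLC_pref012]
  have hs2 : tau2 ![pref012, pref012, pref102] 2 = 0 := by simp [tau2, ht, bestLC_pref102]
  have := lpRun_two_steps _ ht hs2
  rw [hs1, show update ![0, 0, 0] 1 (1 : Fin 3) = ![0, 1, 0] by decide] at this
  exact LPmech_eq_of_lpRun (ht ▸ this)

lemma LPmech_manipulated : LPmech C alpha ![pref012, pref102, pref102] = ![1, 1, 1] := by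
  have ht : tau1 ![pref012, pref102, pref102] = ![0, 1, 1] := by
    funext i; fin_cases i <;> simp [tau1, topObj_pref012, topObj_pref102]
  have hs : tau2 ![pref012, pref102, pref102] 0 = 1 := by
    simp [tau2, ht, bestLC_pref012]
  have hc : compromiser ![0, 1, 1] = 0 := by decide
  have := lpRun_one_step _ (by rw [ht]; decide) (by rw [ht, hc, hs]; decide)
  rw [ht, hc, hs, show update ![0, 1, 1] 0 (1 : Fin 3) = ![1, 1, 1] by decide] at this
  exact LPmech_eq_of_lpRun (ht ▸ this)

lemma not_gsp : ¬ GSP (LPmech C alpha) := by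
  intro h
  refine h ![pref012, pref012, pref102] ![pref012, pref102, pref102] {1, 2} ⟨1, by simp⟩ ?_ ?_
  · intro j hj
    fin_cases j <;> simp_all
  · rw [LPmech_truthful, LPmech_manipulated]
    refine ⟨fun j hj => ?_, 2, by simp, ?_⟩
    · rcases hj with rfl | rfl
      · exact .inl rfl
      · exact .inr (by decide : (1 : Fin 3) < 2)
    · exact (by decide : (1 : Fin 3) < 2)

end LocalPriority.Example

/-- Proposition 3, second part: there is a three-agent, three-object
constrained allocation problem and an implementable local compromiser assignment whose
local priority mechanism is Pareto efficient but not group strategy-proof. -/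
theorem exists_paretoEfficient_not_gsp_localPriority :
    ∃ (C : Set (Fin 3 → Fin 3)) (α : (Fin 3 → Fin 3) → Set (Fin 3))
      (f : (Fin 3 → LinearOrder (Fin 3)) → Fin 3 → Fin 3),
      C.Nonempty ∧ lpInduces C α f ∧ ParetoEff C f ∧ ¬ GSP f := by
  open LocalPriority LocalPriority.Example in
  refine ⟨C, alpha, LPmech C alpha, ⟨![1, 1, 1], by decide⟩,
    lpInduces_LPmech isLCA_singletonLCA fun p => ?_,
    paretoEff_of_top_two_choices fun p => ?_, not_gsp⟩
  · obtain ⟨y, hy, -⟩ := exists_lpRun_top_two p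
    exact ⟨y, hy⟩
  · obtain ⟨y, hy, hpareto⟩ := exists_lpRun_top_two p
    rw [LPmech_eq_of_lpRun hy]
    exact hpareto
end

section
/- Fix a constraint C and let α be an implementable local compromiser assignment for C that satisfies forward consistency. If α′ is a local compromiser assignment for C with α′(x) ⊆ α(x) for every allocation x, then α′ is implementable and LP_{α′} = LP_α. -/
/- Common framework: constrained allocation, local priority mechanisms
   (Root & Ahn, "Local Priority Mechanisms"). Agents `N`, objects `O`.
   A strict preference is encoded as a `LinearOrder` on `O`, where
   `pi.lt b a` means `a` is strictly preferred to `b`. -/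

open Classical

/-!
A *partial step* lets some nonempty set of current local compromisers, none of them at the bottom
of her ranking, move one step down. The local priority algorithms for `α` and for any `α' ⊆ α`
both proceed by partial steps for `α`. Forward consistency makes partial steps commute: after
`S` has moved, the agents of `T \ S` are still compromisers, so both orders meet where `S ∪ T`
has moved. Partial steps are therefore confluent, and a feasible allocation, having no
successor, is the only feasible allocation reachable from a state that reaches one. Every
partial step lowers `∑ i, |LC(x i)|`, so the `α'` algorithm, which never leaves the states that
reach the `α` outcome `y`, can neither fail nor run forever, and stops at `y`.
-/

open Relation

noncomputable section LocalPriority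

variable {N O : Type} [Fintype O]

inductive LPRun (C : Set (N → O)) (α : (N → O) → Set N) (p : N → LinearOrder O) :
    (N → O) → (N → O) → Prop
  | feasible {x : N → O} : x ∈ C → LPRun C α p x x
  | step {x y : N → O} : x ∉ C → lpNoFail α p x → LPRun C α p (lpStep α p x) y →
      LPRun C α p x y

def moveDown (p : N → LinearOrder O) (S : Set N) (x : N → O) : N → O :=
  fun k => if k ∈ S then bestLC (p k) (x k) else x k

def PartialStep (α : (N → O) → Set N) (p : N → LinearOrder O) (x y : N → O) : Prop :=
  ∃ S ⊆ α x, S.Nonempty ∧ (∀ i ∈ S, (LCfin (p i) (x i)).Nonempty) ∧ y = moveDown p S x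

def lcPotential [Fintype N] (p : N → LinearOrder O) (x : N → O) : ℕ :=
  ∑ i, (LCfin (p i) (x i)).card

variable {C : Set (N → O)} {α α' : (N → O) → Set N} {p : N → LinearOrder O}

theorem lpRun_iff_exists_seq {x y : N → O} :
    LPRun C α p x y ↔ ∃ (m : ℕ) (z : ℕ → N → O), z 0 = x ∧
      (∀ t < m, z t ∉ C ∧ lpNoFail α p (z t) ∧ z (t + 1) = lpStep α p (z t)) ∧
      z m = y ∧ y ∈ C := by
  constructor
  · intro h
    induction h with
    | feasible hx => exact ⟨0, fun _ => _, rfl, by simp, rfl, hx⟩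
    | @step x _ hx hnf _ ih =>
      obtain ⟨m, z, hz0, hz, hzm, hy⟩ := ih
      refine ⟨m + 1, fun | 0 => x | t + 1 => z t, rfl, ?_, hzm, hy⟩
      rintro (_ | t) ht
      · exact ⟨hx, hnf, hz0⟩
      · exact hz t (by omega)
  · rintro ⟨m, z, rfl, hz, rfl, hy⟩
    induction m generalizing z with
    | zero => exact .feasible hy
    | succ m ih =>
      obtain ⟨hC, hnf, hnext⟩ := hz 0 m.succ_pos
      refine .step hC hnf ?_
      rw [← hnext]
      exact ih (fun t => z (t + 1)) (fun t ht => hz (t + 1) (by omega)) hy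

theorem lpRunsTo_iff [Nonempty O] {y : N → O} :
    lpRunsTo C α p y ↔ LPRun C α p (tau1 p) y :=
  lpRun_iff_exists_seq.symm

theorem LPRun.mem {x y : N → O} (h : LPRun C α p x y) : y ∈ C := by
  induction h with
  | feasible hx => exact hx
  | step _ _ _ ih => exact ih

theorem LPRun.eq {x y y' : N → O} (h : LPRun C α p x y) (h' : LPRun C α p x y') : y = y' := by
  induction h with
  | feasible hx =>
    cases h' with
    | feasible _ => rfl
    | step hx' _ _ => exact absurd hx hx'
  | step hx _ _ ih =>
    cases h' with
    | feasible hx' => exact absurd hx' hx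
    | step _ _ h' => exact ih h'

theorem LPmech_eq_of_lpRunsTo [Nonempty O] {y : N → O} (h : lpRunsTo C α p y) :
    LPmech C α p = y := by
  have hex : ∃ y, lpRunsTo C α p y := ⟨y, h⟩
  rw [LPmech, dif_pos hex]
  exact (lpRunsTo_iff.mp hex.choose_spec).eq (lpRunsTo_iff.mp h)

theorem moveDown_apply_of_notMem {S : Set N} {x : N → O} {i : N} (hi : i ∉ S) :
    moveDown p S x i = x i :=
  if_neg hi

theorem diffSet_moveDown_subset {S : Set N} {x : N → O} : diffSet x (moveDown p S x) ⊆ S :=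
  fun _ hi => by_contra fun h => hi (moveDown_apply_of_notMem h).symm

theorem moveDown_moveDown {S T : Set N} {x : N → O} (h : Disjoint S T) :
    moveDown p T (moveDown p S x) = moveDown p (S ∪ T) x := by
  funext i
  by_cases hT : i ∈ T
  · simp [moveDown, hT, Set.disjoint_right.mp h hT]
  · by_cases hS : i ∈ S <;> simp [moveDown, hS, hT]

theorem LCfin_bestLC_ssubset (pi : LinearOrder O) {a : O} (h : (LCfin pi a).Nonempty) :
    LCfin pi (bestLC pi a) ⊂ LCfin pi a := by
  let := pi
  have hmem : bestLC pi a ∈ LCfin pi a := by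
    rw [bestLC, dif_pos h]
    exact Finset.max'_mem _ _
  have hlt : bestLC pi a < a := (Finset.mem_filter.mp hmem).2
  refine (Finset.ssubset_iff_of_subset fun c hc => ?_).mpr ⟨_, hmem, fun h' => ?_⟩
  · simp only [LCfin, Finset.mem_filter, Finset.mem_univ, true_and] at hc ⊢
    exact hc.trans hlt
  · exact lt_irrefl _ (Finset.mem_filter.mp h').2

theorem lcPotential_lt [Fintype N] {x y : N → O} (h : PartialStep α p x y) :
    lcPotential p y < lcPotential p x := by
  obtain ⟨S, -, ⟨i₀, hi₀⟩, hLC, rfl⟩ := h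
  have hmove : ∀ i ∈ S, (LCfin (p i) (moveDown p S x i)).card < (LCfin (p i) (x i)).card :=
    fun i hi => by
      rw [moveDown, if_pos hi]
      exact Finset.card_lt_card (LCfin_bestLC_ssubset (p i) (hLC i hi))
  refine Finset.sum_lt_sum (fun i _ => ?_) ⟨i₀, Finset.mem_univ _, hmove i₀ hi₀⟩
  by_cases hi : i ∈ S
  · exact (hmove i hi).le
  · rw [moveDown_apply_of_notMem hi]

theorem notMem_of_partialStep (hlca : IsLCA C α) {x y : N → O} (h : PartialStep α p x y) :
    x ∉ C := by
  obtain ⟨S, hS, ⟨i, hi⟩, -⟩ := h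
  intro hx
  simpa [(hlca x).2 hx] using hS hi

theorem eq_of_reflTransGen_of_mem (hlca : IsLCA C α) {x y : N → O}
    (h : ReflTransGen (PartialStep α p) x y) (hx : x ∈ C) : x = y := by
  rcases h.cases_head with hxy | ⟨_, hstep, -⟩
  · exact hxy
  · exact absurd hx (notMem_of_partialStep hlca hstep)

theorem mem_moveDown_of_forwardCons (hfc : ForwardCons α) {S : Set N} {x : N → O}
    (hS : S ⊆ α x) {i : N} (hi : i ∈ α x) (hiS : i ∉ S) : i ∈ α (moveDown p S x) :=
  hfc x _ (diffSet_moveDown_subset.trans hS)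
    ⟨hi, fun hd => hd (moveDown_apply_of_notMem hiS).symm⟩

theorem reflGen_partialStep_moveDown_union (hfc : ForwardCons α) {S T : Set N} {x : N → O}
    (hS : S ⊆ α x) (hT : T ⊆ α x) (hTLC : ∀ i ∈ T, (LCfin (p i) (x i)).Nonempty) :
    ReflGen (PartialStep α p) (moveDown p S x) (moveDown p (S ∪ T) x) := by
  rcases (T \ S).eq_empty_or_nonempty with hTS | hTS
  · rw [Set.union_eq_self_of_subset_right (Set.sdiff_eq_empty.mp hTS)]
  · refine .single ⟨T \ S, fun i hi => mem_moveDown_of_forwardCons hfc hS (hT hi.1) hi.2, hTS,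
      fun i hi => ?_, ?_⟩
    · rw [moveDown_apply_of_notMem hi.2]
      exact hTLC i hi.1
    · rw [moveDown_moveDown Set.disjoint_sdiff_right, Set.union_sdiff_self]

theorem partialStep_diamond (hfc : ForwardCons α) (x b c : N → O)
    (hb : PartialStep α p x b) (hc : PartialStep α p x c) :
    ∃ d, ReflGen (PartialStep α p) b d ∧ ReflTransGen (PartialStep α p) c d := by
  obtain ⟨S, hS, -, hSLC, rfl⟩ := hb
  obtain ⟨T, hT, -, hTLC, rfl⟩ := hc
  refine ⟨moveDown p (S ∪ T) x, reflGen_partialStep_moveDown_union hfc hS hT hTLC, ?_⟩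
  rw [Set.union_comm]
  exact (reflGen_partialStep_moveDown_union hfc hT hS hSLC).to_reflTransGen

theorem reflTransGen_of_reflTransGen_of_mem (hlca : IsLCA C α) (hfc : ForwardCons α)
    {x y z : N → O} (hxy : ReflTransGen (PartialStep α p) x y) (hy : y ∈ C)
    (hxz : ReflTransGen (PartialStep α p) x z) : ReflTransGen (PartialStep α p) z y := by
  obtain ⟨w, hyw, hzw⟩ := church_rosser (partialStep_diamond hfc) hxy hxz
  rwa [eq_of_reflTransGen_of_mem hlca hyw hy]

theorem lpNoFail_of_reflTransGen (hlca : IsLCA C α) (hfc : ForwardCons α) {x y : N → O}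
    (h : ReflTransGen (PartialStep α p) x y) (hy : y ∈ C) : lpNoFail α p x := by
  induction h using ReflTransGen.head_induction_on with
  | refl =>
    intro i hi
    simp [(hlca _).2 hy] at hi
  | head hstep _ ih =>
    obtain ⟨S, hS, -, hSLC, rfl⟩ := hstep
    intro i hi
    by_cases hiS : i ∈ S
    · exact hSLC i hiS
    · simpa only [moveDown_apply_of_notMem hiS] using
        ih i (mem_moveDown_of_forwardCons hfc hS hi hiS)

theorem LPRun.reflTransGen (hlca : IsLCA C α) {x y : N → O} (h : LPRun C α p x y) :
    ReflTransGen (PartialStep α p) x y := by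
  induction h with
  | feasible _ => exact .refl
  | step hx hnf _ ih => exact .head ⟨α _, subset_rfl, (hlca _).1 hx, hnf, rfl⟩ ih

theorem lpRun_of_reflTransGen [Fintype N] (hlca : IsLCA C α) (hfc : ForwardCons α)
    (hlca' : IsLCA C α') (hsub : ∀ x, α' x ⊆ α x) {x y : N → O}
    (h : ReflTransGen (PartialStep α p) x y) (hy : y ∈ C) : LPRun C α' p x y := by
  induction hφ : lcPotential p x using Nat.strong_induction_on generalizing x with
  | _ n ih =>
  by_cases hx : x ∈ C
  · rw [eq_of_reflTransGen_of_mem hlca h hx]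
    exact .feasible hy
  · have hnf : lpNoFail α' p x := fun i hi =>
      lpNoFail_of_reflTransGen hlca hfc h hy i (hsub x hi)
    have hstep : PartialStep α p x (lpStep α' p x) := ⟨α' x, hsub x, (hlca' x).1 hx, hnf, rfl⟩
    exact .step hx hnf (ih _ (hφ ▸ lcPotential_lt hstep)
      (reflTransGen_of_reflTransGen_of_mem hlca hfc h hy (.single hstep)) rfl)

theorem lpRunsTo_of_forwardCons_of_subset [Fintype N] [Nonempty O] (hlca : IsLCA C α)
    (hfc : ForwardCons α) (hlca' : IsLCA C α') (hsub : ∀ x, α' x ⊆ α x) {y : N → O}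
    (hy : lpRunsTo C α p y) : lpRunsTo C α' p y := by
  have hrun := lpRunsTo_iff.mp hy
  exact lpRunsTo_iff.mpr
    (lpRun_of_reflTransGen hlca hfc hlca' hsub (hrun.reflTransGen hlca) hrun.mem)

end LocalPriority

theorem forwardCons_sub_lca_same_mechanism_general
    {N O : Type} [Fintype N] [Fintype O] [Nonempty O]
    (C : Set (N → O))
    (α : (N → O) → Set N) (hlca : IsLCA C α)
    (himp : lpImplementable C α) (hfc : ForwardCons α)
    (α' : (N → O) → Set N) (hlca' : IsLCA C α')
    (hsub : ∀ x, α' x ⊆ α x) :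
    lpImplementable C α' ∧ ∀ p, LPmech C α' p = LPmech C α p := by
  have hrun' : ∀ {p y}, lpRunsTo C α p y → lpRunsTo C α' p y :=
    lpRunsTo_of_forwardCons_of_subset hlca hfc hlca' hsub
  refine ⟨fun p => (himp p).imp fun _ => hrun', fun p => ?_⟩
  obtain ⟨y, hy⟩ := himp p
  rw [LPmech_eq_of_lpRunsTo hy, LPmech_eq_of_lpRunsTo (hrun' hy)]

/-- Proposition 5: if `α` is implementable and forward consistent and
`α'` is a local compromiser assignment with `α' ⊆ α` pointwise, then `α'` is
implementable and `LP_{α'} = LP_α`. -/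
theorem forwardCons_sub_lca_same_mechanism
    {N O : Type} [Fintype N] [Fintype O] [Nonempty O]
    (C : Set (N → O)) (hC : C.Nonempty)
    (α : (N → O) → Set N) (hlca : IsLCA C α)
    (himp : lpImplementable C α) (hfc : ForwardCons α)
    (α' : (N → O) → Set N) (hlca' : IsLCA C α')
    (hsub : ∀ x, α' x ⊆ α x) :
    lpImplementable C α' ∧ ∀ p, LPmech C α' p = LPmech C α p :=
  forwardCons_sub_lca_same_mechanism_general C α hlca himp hfc α' hlca' hsub
end
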